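/- Let σ(z) = 1/(1+exp(-z)) be the logistic sigmoid. For every ξ ∈ ℝ with ξ ≠ 0 and every z ∈ ℝ, σ(z) ≥ σ(ξ) · exp((z−ξ)/2 − η(ξ)(z² − ξ²)), where η(ξ) = (1/(2ξ))(σ(ξ) − 1/2). -/

import Mathlib

noncomputable def sigmoid (z : ℝ) : ℝ := 1 / (1 + Real.exp (-z))

noncomputable def eta (ξ : ℝ) : ℝ := (1 / (2 * ξ)) * (sigmoid ξ - 1 / 2)

/-!
Since σ(z) = e^{z/2} / (2 cosh (z/2)) and σ(ξ) - 1/2 = tanh (ξ/2) / 2, the bound is equivalent to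
`log (cosh x) ≤ log (cosh y) + tanh y / (2y) * (x² - y²)` with `x = z/2`, `y = ξ/2`: the tangent
line at `y²` of the concave function `t ↦ log (cosh √t)`. Concavity amounts to `tanh u / u` being
decreasing on `(0, ∞)`, so that `u ↦ tanh y / (2y) * u² - log (cosh u)` attains its minimum over
`[0, ∞)` at `y`.
-/

open Real hiding sigmoid
open Set

namespace Real

theorem hasDerivAt_tanh (x : ℝ) : HasDerivAt tanh (1 / cosh x ^ 2) x := by
  have h := (hasDerivAt_sinh x).div (hasDerivAt_cosh x) (cosh_pos x).ne'
  rw [← sq, ← sq, cosh_sq_sub_sinh_sq] at h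
  rwa [show tanh = fun x ↦ sinh x / cosh x from funext fun x ↦ tanh_eq_sinh_div_cosh x]

theorem strictAntiOn_tanh_div_self : StrictAntiOn (fun x ↦ tanh x / x) (Ioi 0) := by
  have hderiv (x : ℝ) (hx : x ≠ 0) :
      HasDerivAt (fun x ↦ tanh x / x) ((1 / cosh x ^ 2 * x - tanh x * 1) / x ^ 2) x :=
    (hasDerivAt_tanh x).div (hasDerivAt_id x) hx
  refine strictAntiOn_of_deriv_neg (convex_Ioi 0)
    (fun x hx ↦ (hderiv x (ne_of_gt hx)).continuousAt.continuousWithinAt) fun x hx ↦ ?_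
  rw [interior_Ioi] at hx
  have hx : 0 < x := hx
  rw [(hderiv x hx.ne').deriv]
  refine div_neg_of_neg_of_pos ?_ (by positivity)
  -- `x < sinh x * cosh x = sinh (2x) / 2`
  have hsinh : 2 * x < 2 * sinh x * cosh x := by
    rw [← sinh_two_mul]; exact self_lt_sinh_iff.mpr (by positivity)
  have hcosh := cosh_pos x
  rw [tanh_eq_sinh_div_cosh, sub_neg, div_mul_eq_mul_div, mul_one, one_mul,
    div_lt_div_iff₀ (by positivity) hcosh]
  nlinarith

theorem hasDerivAt_log_cosh (x : ℝ) : HasDerivAt (fun x ↦ log (cosh x)) (tanh x) x := by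
  simpa only [← tanh_eq_sinh_div_cosh] using (hasDerivAt_cosh x).log (cosh_pos x).ne'

theorem log_cosh_le_add_mul_sq_sub_sq_of_nonneg {x y : ℝ} (hx : 0 ≤ x) (hy : 0 < y) :
    log (cosh x) ≤ log (cosh y) + tanh y / (2 * y) * (x ^ 2 - y ^ 2) := by
  let φ : ℝ → ℝ := fun u ↦ tanh y / (2 * y) * u ^ 2 - log (cosh u)
  have hφ (u : ℝ) : HasDerivAt φ (tanh y / (2 * y) * (2 * u) - tanh u) u := by
    simpa using ((hasDerivAt_pow 2 u).const_mul _).fun_sub (hasDerivAt_log_cosh u)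
  have hφ' {u : ℝ} (hu : 0 < u) : deriv φ u = u * (tanh y / y - tanh u / u) := by
    rw [(hφ u).deriv]; field_simp
  have hmin : IsMinOn φ (Ici 0) y := by
    refine isMinOn_Ici_of_deriv (hφ 0).continuousAt (hφ y).continuousAt
      (fun u _ ↦ (hφ u).differentiableAt.differentiableWithinAt)
      (fun u _ ↦ (hφ u).differentiableAt.differentiableWithinAt) (fun u hu ↦ ?_) fun u hu ↦ ?_
    · rw [hφ' hu.1]
      exact mul_nonpos_of_nonneg_of_nonpos hu.1.le
        (sub_nonpos.mpr (strictAntiOn_tanh_div_self.antitoneOn hu.1 hy hu.2.le))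
    · have hu : y < u := hu
      rw [hφ' (hy.trans hu)]
      exact mul_nonneg (hy.trans hu).le
        (sub_nonneg.mpr (strictAntiOn_tanh_div_self.antitoneOn hy (hy.trans hu) hu.le))
  have := hmin (mem_Ici.mpr hx)
  simp only [mem_ofPred_eq, φ] at this
  linarith

theorem log_cosh_le_add_mul_sq_sub_sq {y : ℝ} (hy : y ≠ 0) (x : ℝ) :
    log (cosh x) ≤ log (cosh y) + tanh y / (2 * y) * (x ^ 2 - y ^ 2) := by
  have h := log_cosh_le_add_mul_sq_sub_sq_of_nonneg (abs_nonneg x) (abs_pos.mpr hy)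
  have hslope : tanh |y| / (2 * |y|) = tanh y / (2 * y) := by
    rcases abs_choice y with h | h <;> simp [h, tanh_neg, neg_div_neg_eq]
  rwa [cosh_abs, cosh_abs, sq_abs, sq_abs, hslope] at h

end Real

theorem sigmoid_eq_exp_sub_log_cosh (z : ℝ) :
    sigmoid z = exp (z / 2 - log (cosh (z / 2))) / 2 := by
  have hz : exp (-z) = exp (-(z / 2)) ^ 2 := by rw [← exp_nat_mul]; ring_nf
  have hinv : exp (z / 2) * exp (-(z / 2)) = 1 := by rw [← exp_add]; simp
  rw [sigmoid, exp_sub, exp_log (cosh_pos _), cosh_eq, hz]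
  field_simp
  linear_combination -exp (-(z / 2)) * hinv

theorem sigmoid_sub_half (z : ℝ) : sigmoid z - 1 / 2 = tanh (z / 2) / 2 := by
  have hz : exp (-z) = exp (-(z / 2)) ^ 2 := by rw [← exp_nat_mul]; ring_nf
  have hinv : exp (z / 2) * exp (-(z / 2)) = 1 := by rw [← exp_add]; simp
  rw [sigmoid, tanh_eq_sinh_div_cosh, sinh_eq, cosh_eq, hz]
  field_simp
  linear_combination -2 * exp (-(z / 2)) * hinv

theorem eta_eq_tanh_div (ξ : ℝ) : eta ξ = tanh (ξ / 2) / (4 * ξ) := by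
  rw [eta, sigmoid_sub_half]; ring

/-- Jaakkola–Jordan quadratic lower bound on the logistic sigmoid. -/
theorem stmt_0 (ξ : ℝ) (hξ : ξ ≠ 0) (z : ℝ) :
    sigmoid z ≥ sigmoid ξ * Real.exp ((z - ξ) / 2 - eta ξ * (z ^ 2 - ξ ^ 2)) := by
  have h := log_cosh_le_add_mul_sq_sub_sq (div_ne_zero hξ two_ne_zero) (z / 2)
  rw [sigmoid_eq_exp_sub_log_cosh, sigmoid_eq_exp_sub_log_cosh, eta_eq_tanh_div,
    div_mul_eq_mul_div, ← exp_add, ge_iff_le]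
  gcongr
  have : tanh (ξ / 2) / (2 * (ξ / 2)) * ((z / 2) ^ 2 - (ξ / 2) ^ 2)
      = tanh (ξ / 2) / (4 * ξ) * (z ^ 2 - ξ ^ 2) := by ring
  linarith
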